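/- arXiv:nlin/0511007 — 2 statements merged into one kernel-verified Lean document; each statement's English description precedes it below -/
import Mathlib

section
/- If k = 8b², then the cubic function J4 = (1/3)(p1³ + p2³ + p3³) − b((q3−q2)p1² + (q1−q3)p2² + (q2−q1)p3²) + b²(z1 p1 + z2 p2 + z3 p3) + 9b³((q2−q1)³ + (q1−q3)³ + (q3−q2)³), with z1 = 4((q2−q1)² + (q1−q3)²) + (q3−q2)², z2 = 4((q3−q2)² + (q2−q1)²) + (q1−q3)², z3 = 4((q1−q3)² + (q3−q2)²) + (q2−q1)², is a constant of motion for H: {H, J4} = 0. -/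
/-!
The coupling `k` enters `H` only through the term `(b² + k) V` with `V = ½ Σ (qᵢ - qⱼ)²`, so
`{H, J4}` is affine in `k`, with slope `{V, J4} = Σᵢ ∂V/∂qᵢ ∂J4/∂pᵢ`. Computing the gradients of
`H` and `J4` shows that the remaining terms add up to `-8b² {V, J4}`, hence
`{H, J4} = (k - 8b²) {V, J4}`.
-/

noncomputable def pd (i : Fin 6) (f : (Fin 6 → ℝ) → ℝ) (x : Fin 6 → ℝ) : ℝ :=
  fderiv ℝ f x (Pi.single i 1)

/-- Canonical Poisson bracket; a point is `x = (q1, q2, q3, p1, p2, p3)`, so `qᵢ = x (i - 1)` and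
`pᵢ = x (i + 2)`. -/
noncomputable def pb (F G : (Fin 6 → ℝ) → ℝ) (x : Fin 6 → ℝ) : ℝ :=
  (pd 0 F x * pd 3 G x - pd 3 F x * pd 0 G x) +
  (pd 1 F x * pd 4 G x - pd 4 F x * pd 1 G x) +
  (pd 2 F x * pd 5 G x - pd 5 F x * pd 2 G x)

def L1 (x : Fin 6 → ℝ) : ℝ := x 1 * x 5 - x 2 * x 4
def L2 (x : Fin 6 → ℝ) : ℝ := x 2 * x 3 - x 0 * x 5
def L3 (x : Fin 6 → ℝ) : ℝ := x 0 * x 4 - x 1 * x 3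

noncomputable def Ham (b k : ℝ) (x : Fin 6 → ℝ) : ℝ :=
  (1/2) * (x 3 ^ 2 + x 4 ^ 2 + x 5 ^ 2) + b * (L1 x + L2 x + L3 x) +
  (1/2) * (b ^ 2 + k) * ((x 1 - x 0) ^ 2 + (x 2 - x 1) ^ 2 + (x 0 - x 2) ^ 2)

def J2 (x : Fin 6 → ℝ) : ℝ := x 3 + x 4 + x 5

def J3 (x : Fin 6 → ℝ) : ℝ := L1 x + L2 x + L3 x

def z1 (x : Fin 6 → ℝ) : ℝ := 4 * ((x 1 - x 0)^2 + (x 0 - x 2)^2) + (x 2 - x 1)^2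
def z2 (x : Fin 6 → ℝ) : ℝ := 4 * ((x 2 - x 1)^2 + (x 1 - x 0)^2) + (x 0 - x 2)^2
def z3 (x : Fin 6 → ℝ) : ℝ := 4 * ((x 0 - x 2)^2 + (x 2 - x 1)^2) + (x 1 - x 0)^2

noncomputable def J4c (b : ℝ) (x : Fin 6 → ℝ) : ℝ :=
  (1/3) * (x 3 ^ 3 + x 4 ^ 3 + x 5 ^ 3)
  - b * ((x 2 - x 1) * x 3 ^ 2 + (x 0 - x 2) * x 4 ^ 2 + (x 1 - x 0) * x 5 ^ 2)
  + b^2 * (z1 x * x 3 + z2 x * x 4 + z3 x * x 5)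
  + 9 * b^3 * ((x 1 - x 0)^3 + (x 0 - x 2)^3 + (x 2 - x 1)^3)

section PartialDerivative

variable {i : Fin 6} {f g : (Fin 6 → ℝ) → ℝ} {x : Fin 6 → ℝ}

theorem pd_const (c : ℝ) : pd i (fun _ => c) x = 0 := by
  simp [pd]

theorem pd_apply (j : Fin 6) : pd i (fun y => y j) x = (Pi.single i 1 : Fin 6 → ℝ) j := by
  simp [pd, (hasFDerivAt_apply j x).fderiv]

theorem pd_fun_add (hf : DifferentiableAt ℝ f x) (hg : DifferentiableAt ℝ g x) :
    pd i (fun y => f y + g y) x = pd i f x + pd i g x := by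
  simp [pd, fderiv_fun_add hf hg]

theorem pd_fun_sub (hf : DifferentiableAt ℝ f x) (hg : DifferentiableAt ℝ g x) :
    pd i (fun y => f y - g y) x = pd i f x - pd i g x := by
  simp [pd, fderiv_fun_sub hf hg]

theorem pd_fun_mul (hf : DifferentiableAt ℝ f x) (hg : DifferentiableAt ℝ g x) :
    pd i (fun y => f y * g y) x = pd i f x * g x + f x * pd i g x := by
  simp [pd, fderiv_fun_mul hf hg]
  ring

theorem pd_fun_pow (n : ℕ) (hf : DifferentiableAt ℝ f x) :
    pd i (fun y => f y ^ n) x = n * f x ^ (n - 1) * pd i f x := by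
  simp [pd, fderiv_fun_pow n hf]

end PartialDerivative

theorem pd_Ham (b k : ℝ) (x : Fin 6 → ℝ) :
    pd 0 (Ham b k) x = b * (x 4 - x 5) + (b ^ 2 + k) * (2 * x 0 - x 1 - x 2) ∧
    pd 1 (Ham b k) x = b * (x 5 - x 3) + (b ^ 2 + k) * (2 * x 1 - x 2 - x 0) ∧
    pd 2 (Ham b k) x = b * (x 3 - x 4) + (b ^ 2 + k) * (2 * x 2 - x 0 - x 1) ∧
    pd 3 (Ham b k) x = x 3 + b * (x 2 - x 1) ∧
    pd 4 (Ham b k) x = x 4 + b * (x 0 - x 2) ∧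
    pd 5 (Ham b k) x = x 5 + b * (x 1 - x 0) := by
  unfold Ham L1 L2 L3
  refine ⟨?_, ?_, ?_, ?_, ?_, ?_⟩ <;>
    simp (disch := fun_prop) only [pd_fun_add, pd_fun_sub, pd_fun_mul, pd_fun_pow, pd_const,
      pd_apply, Pi.single_apply, Fin.reduceEq, if_true, if_false] <;>
    ring

theorem pd_J4c (b : ℝ) (x : Fin 6 → ℝ) :
    pd 0 (J4c b) x = -b * (x 4 ^ 2 - x 5 ^ 2) + b ^ 2 * (8 * ((x 0 - x 2) - (x 1 - x 0)) * x 3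
      + (2 * (x 0 - x 2) - 8 * (x 1 - x 0)) * x 4 + (8 * (x 0 - x 2) - 2 * (x 1 - x 0)) * x 5)
      + 27 * b ^ 3 * ((x 0 - x 2) ^ 2 - (x 1 - x 0) ^ 2) ∧
    pd 1 (J4c b) x = -b * (x 5 ^ 2 - x 3 ^ 2) + b ^ 2 * (8 * ((x 1 - x 0) - (x 2 - x 1)) * x 4
      + (2 * (x 1 - x 0) - 8 * (x 2 - x 1)) * x 5 + (8 * (x 1 - x 0) - 2 * (x 2 - x 1)) * x 3)
      + 27 * b ^ 3 * ((x 1 - x 0) ^ 2 - (x 2 - x 1) ^ 2) ∧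
    pd 2 (J4c b) x = -b * (x 3 ^ 2 - x 4 ^ 2) + b ^ 2 * (8 * ((x 2 - x 1) - (x 0 - x 2)) * x 5
      + (2 * (x 2 - x 1) - 8 * (x 0 - x 2)) * x 3 + (8 * (x 2 - x 1) - 2 * (x 0 - x 2)) * x 4)
      + 27 * b ^ 3 * ((x 2 - x 1) ^ 2 - (x 0 - x 2) ^ 2) ∧
    pd 3 (J4c b) x = x 3 ^ 2 - 2 * b * (x 2 - x 1) * x 3 + b ^ 2 * z1 x ∧
    pd 4 (J4c b) x = x 4 ^ 2 - 2 * b * (x 0 - x 2) * x 4 + b ^ 2 * z2 x ∧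
    pd 5 (J4c b) x = x 5 ^ 2 - 2 * b * (x 1 - x 0) * x 5 + b ^ 2 * z3 x := by
  unfold J4c z1 z2 z3
  refine ⟨?_, ?_, ?_, ?_, ?_, ?_⟩ <;>
    simp (disch := fun_prop) only [pd_fun_add, pd_fun_sub, pd_fun_mul, pd_fun_pow, pd_const,
      pd_apply, Pi.single_apply, Fin.reduceEq, if_true, if_false] <;>
    ring

theorem pb_Ham_J4c (b k : ℝ) (x : Fin 6 → ℝ) :
    pb (Ham b k) (J4c b) x = (k - 8 * b ^ 2) *
      ((2 * x 0 - x 1 - x 2) * pd 3 (J4c b) x + (2 * x 1 - x 2 - x 0) * pd 4 (J4c b) x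
        + (2 * x 2 - x 0 - x 1) * pd 5 (J4c b) x) := by
  obtain ⟨hH0, hH1, hH2, hH3, hH4, hH5⟩ := pd_Ham b k x
  obtain ⟨hJ0, hJ1, hJ2, hJ3, hJ4, hJ5⟩ := pd_J4c b x
  rw [pb, hH0, hH1, hH2, hH3, hH4, hH5, hJ0, hJ1, hJ2, hJ3, hJ4, hJ5]
  unfold z1 z2 z3
  ring

/-- If k = 8b², the cubic J4 is a constant of motion: {H, J4} = 0. -/
theorem stmt16 (b k : ℝ) (hk : k = 8 * b^2) (x : Fin 6 → ℝ) :
    pb (Ham b k) (J4c b) x = 0 := by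
  rw [pb_Ham_J4c, hk, sub_self, zero_mul]
end

section
/- If k = 8b², then the cubic integral J4 (as above) Poisson-commutes with J2 = p1 + p2 + p3: {J2, J4} = 0. -/
open scoped BigOperators

/-!
`J2` is the linear function `p1 + p2 + p3`, so `{J2, F}` is minus the derivative of `F` along the
diagonal translation `q ↦ q + t(1,1,1)`; `J4` depends on `q` only through the differences
`qi - qj`, hence is invariant under that translation and `{J2, J4} = 0`.
-/

theorem fderiv_apply_eq_zero_of_forall_add_smul_eq {E F : Type*} [NormedAddCommGroup E]
    [NormedSpace ℝ E] [NormedAddCommGroup F] [NormedSpace ℝ F] {f : E → F} {x : E}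
    (hf : DifferentiableAt ℝ f x) (v : E) (hinv : ∀ t : ℝ, f (x + t • v) = f x) :
    fderiv ℝ f x v = 0 := by
  rw [← hf.lineDeriv_eq_fderiv, lineDeriv]
  simp only [hinv, deriv_const]

def qDiag : Fin 6 → ℝ := Pi.single 0 1 + Pi.single 1 1 + Pi.single 2 1

theorem pd_J2 (i : Fin 6) (x : Fin 6 → ℝ) : pd i J2 x = J2 (Pi.single i 1) := by
  let π : Fin 6 → (Fin 6 → ℝ) →L[ℝ] ℝ := ContinuousLinearMap.proj
  have hJ2 : J2 = ⇑(π 3 + π 4 + π 5) := rfl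
  rw [pd, hJ2, ContinuousLinearMap.fderiv]

theorem pb_J2 (F : (Fin 6 → ℝ) → ℝ) (x : Fin 6 → ℝ) :
    pb J2 F x = -fderiv ℝ F x qDiag := by
  simp only [pb, pd_J2]
  simp [J2, qDiag, pd]
  ring

theorem differentiableAt_J4c (b : ℝ) (x : Fin 6 → ℝ) : DifferentiableAt ℝ (J4c b) x := by
  unfold J4c z1 z2 z3
  fun_prop

theorem J4c_add_smul_qDiag (b t : ℝ) (x : Fin 6 → ℝ) : J4c b (x + t • qDiag) = J4c b x := by
  simp [J4c, z1, z2, z3, qDiag]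

theorem stmt17_general (b : ℝ) (x : Fin 6 → ℝ) :
    pb J2 (J4c b) x = 0 := by
  rw [pb_J2,
    fderiv_apply_eq_zero_of_forall_add_smul_eq (differentiableAt_J4c b x) qDiag
      (fun t => J4c_add_smul_qDiag b t x), neg_zero]

/-- If k = 8b², the cubic J4 Poisson-commutes with J2: {J2, J4} = 0. -/
theorem stmt17 (b k : ℝ) (hk : k = 8 * b^2) (x : Fin 6 → ℝ) :
    pb J2 (J4c b) x = 0 :=
  stmt17_general b x
end
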